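/- arXiv:1705.02008 — 4 statements merged into one kernel-verified Lean document; each statement's English description precedes it below -/
import Mathlib

section
/- Let Ψ ⊆ ℝ₊^{n×n} be bounded. The semigroup generated by Ψ under max-multiplication is bounded if and only if there exists a monotone norm ‖·‖ on ℝⁿ such that η_‖·‖(A) ≤ 1 for all A ∈ Ψ. -/
open scoped BigOperators

namespace MaxAlg

variable {n : ℕ}

/-- max-algebraic matrix product: (A ⊗ B) i j = max_k A i k * B k j -/
noncomputable def maxMul (A B : Fin n → Fin n → ℝ) : Fin n → Fin n → ℝ :=
  fun i j => ⨆ k : Fin n, A i k * B k j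

/-- max-algebraic matrix-vector product -/
noncomputable def maxVec (A : Fin n → Fin n → ℝ) (x : Fin n → ℝ) : Fin n → ℝ :=
  fun i => ⨆ j : Fin n, A i j * x j

/-- the identity matrix -/
def idMat (n : ℕ) : Fin n → Fin n → ℝ := fun i j => if i = j then 1 else 0

/-- maximal cycle geometric mean: max over simple cycles of the geometric
mean of the corresponding entries -/
noncomputable def mu (A : Fin n → Fin n → ℝ) : ℝ :=
  ⨆ k : Fin n, ⨆ c : {f : Fin (k.1 + 1) → Fin n // Function.Injective f},
    (∏ j : Fin (k.1 + 1), A (c.1 j) (c.1 (j + 1))) ^ ((1 : ℝ) / ((k.1 : ℝ) + 1))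

/-- entrywise supremum S(Ψ) of a set of matrices -/
noncomputable def Ssup (Ψ : Set (Fin n → Fin n → ℝ)) : Fin n → Fin n → ℝ :=
  fun i j => sSup ((fun A => A i j) '' Ψ)

/-- max-algebraic joint spectral radius, via μ(Ψ) = μ(S(Ψ)) -/
noncomputable def muSet (Ψ : Set (Fin n → Fin n → ℝ)) : ℝ := mu (Ssup Ψ)

/-- irreducibility of a nonnegative matrix -/
def Irred (A : Fin n → Fin n → ℝ) : Prop :=
  ∀ I : Set (Fin n), I.Nonempty → I ≠ Set.univ → ∃ i ∈ I, ∃ j, j ∉ I ∧ A i j ≠ 0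

/-- max-convex hull: finite combinations ⊕ αᵢ Aᵢ with αᵢ ≥ 0 and max αᵢ = 1 -/
def maxConv (M : Set (Fin n → Fin n → ℝ)) : Set (Fin n → Fin n → ℝ) :=
  {B | ∃ (k : ℕ) (α : Fin (k + 1) → ℝ) (A : Fin (k + 1) → (Fin n → Fin n → ℝ)),
    (∀ i, 0 ≤ α i) ∧ (∀ i, A i ∈ M) ∧ (⨆ i, α i) = 1 ∧
    B = fun i j => ⨆ l, α l * A l i j}

/-- max-span (max cone): finite combinations ⊕ αᵢ Aᵢ with αᵢ ≥ 0 -/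
def maxSpan (M : Set (Fin n → Fin n → ℝ)) : Set (Fin n → Fin n → ℝ) :=
  {B | ∃ (k : ℕ) (α : Fin (k + 1) → ℝ) (A : Fin (k + 1) → (Fin n → Fin n → ℝ)),
    (∀ i, 0 ≤ α i) ∧ (∀ i, A i ∈ M) ∧
    B = fun i j => ⨆ l, α l * A l i j}

/-- Ψ_⊗^m : set of max-products of m matrices from Ψ (Ψ_⊗^0 = {I}) -/
noncomputable def prodSet (Ψ : Set (Fin n → Fin n → ℝ)) : ℕ → Set (Fin n → Fin n → ℝ)
  | 0 => {idMat n}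
  | m + 1 => {C | ∃ A ∈ Ψ, ∃ B ∈ prodSet Ψ m, C = maxMul A B}

/-- a norm on ℝⁿ -/
structure NormOn (n : ℕ) where
  f : (Fin n → ℝ) → ℝ
  eq_zero : ∀ x, f x = 0 ↔ x = 0
  smul : ∀ (a : ℝ) (x : Fin n → ℝ), f (a • x) = |a| * f x
  add : ∀ x y : Fin n → ℝ, f (x + y) ≤ f x + f y

/-- a norm is monotone if |x| ≤ |y| entrywise implies ν(x) ≤ ν(y) -/
def NormOn.Mono (N : NormOn n) : Prop :=
  ∀ x y : Fin n → ℝ, (∀ i, |x i| ≤ |y i|) → N.f x ≤ N.f y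

/-- max-induced matrix norm η_‖·‖(A) = sup{‖A ⊗ x‖/‖x‖ : x ∈ ℝ₊ⁿ, x ≠ 0} -/
noncomputable def eta (N : NormOn n) (A : Fin n → Fin n → ℝ) : ℝ :=
  ⨆ x : {x : Fin n → ℝ // (∀ i, 0 ≤ x i) ∧ x ≠ 0}, N.f (maxVec A x.1) / N.f x.1

end MaxAlg

namespace MaxAlg

variable {n : ℕ}

private lemma bddA (f : Fin n → ℝ) : BddAbove (Set.range f) :=
  (Set.finite_range f).bddAbove

private lemma le_fin_ciSup (f : Fin n → ℝ) (i : Fin n) : f i ≤ ⨆ j, f j :=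
  le_ciSup (bddA f) i

private lemma fin_iSup_comm (f : Fin n → Fin n → ℝ) (i0 : Fin n) :
    ⨆ i, ⨆ j, f i j = ⨆ j, ⨆ i, f i j := by
  haveI : Nonempty (Fin n) := ⟨i0⟩
  apply le_antisymm
  · exact ciSup_le fun i => ciSup_le fun j =>
      le_trans (le_fin_ciSup (fun i' => f i' j) i)
        (le_fin_ciSup (fun j' => ⨆ i', f i' j') j)
  · exact ciSup_le fun j => ciSup_le fun i =>
      le_trans (le_fin_ciSup (fun j' => f i j') j)
        (le_fin_ciSup (fun i' => ⨆ j', f i' j') i)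

lemma maxVec_nonneg {A : Fin n → Fin n → ℝ} {x : Fin n → ℝ}
    (hA : ∀ i j, 0 ≤ A i j) (hx : ∀ j, 0 ≤ x j) : ∀ i, 0 ≤ maxVec A x i := fun i =>
  le_trans (mul_nonneg (hA i i) (hx i)) (le_fin_ciSup (fun j => A i j * x j) i)

lemma maxVec_maxMul {A B : Fin n → Fin n → ℝ} {x : Fin n → ℝ}
    (hA : ∀ i j, 0 ≤ A i j) (hx : ∀ j, 0 ≤ x j) :
    maxVec (maxMul A B) x = maxVec A (maxVec B x) := by
  funext i
  haveI : Nonempty (Fin n) := ⟨i⟩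
  show (⨆ j, (⨆ k, A i k * B k j) * x j) = ⨆ k, A i k * ⨆ j, B k j * x j
  calc (⨆ j, (⨆ k, A i k * B k j) * x j)
      = ⨆ j, ⨆ k, A i k * B k j * x j := by
        refine iSup_congr fun j => ?_
        rw [Real.iSup_mul_of_nonneg (hx j)]
    _ = ⨆ k, ⨆ j, A i k * B k j * x j := fin_iSup_comm _ i
    _ = ⨆ k, A i k * ⨆ j, B k j * x j := by
        refine iSup_congr fun k => ?_
        rw [Real.mul_iSup_of_nonneg (hA i k)]
        exact iSup_congr fun j => by ring

lemma maxVec_idMat {x : Fin n → ℝ} (hx : ∀ i, 0 ≤ x i) : maxVec (idMat n) x = x := by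
  funext i
  haveI : Nonempty (Fin n) := ⟨i⟩
  show (⨆ j, idMat n i j * x j) = x i
  apply le_antisymm
  · refine ciSup_le fun j => ?_
    rcases eq_or_ne i j with h | h
    · simp [idMat, h]
    · simp [idMat, h, hx i]
  · have := le_fin_ciSup (fun j => idMat n i j * x j) i
    simpa [idMat] using this

lemma maxMul_idMat_right {A : Fin n → Fin n → ℝ} (hA : ∀ i j, 0 ≤ A i j) :
    maxMul A (idMat n) = A := by
  funext i j
  haveI : Nonempty (Fin n) := ⟨i⟩
  show (⨆ k, A i k * idMat n k j) = A i j
  apply le_antisymm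
  · refine ciSup_le fun k => ?_
    rcases eq_or_ne k j with h | h
    · simp [idMat, h]
    · simp [idMat, h, hA i j]
  · have := le_fin_ciSup (fun k => A i k * idMat n k j) j
    simpa [idMat] using this

lemma maxMul_idMat_left {A : Fin n → Fin n → ℝ} (hA : ∀ i j, 0 ≤ A i j) :
    maxMul (idMat n) A = A := by
  funext i j
  exact congrFun (maxVec_idMat (x := fun k => A k j) (fun k => hA k j)) i

lemma maxMul_assoc {A B C : Fin n → Fin n → ℝ}
    (hA : ∀ i j, 0 ≤ A i j) (hC : ∀ i j, 0 ≤ C i j) :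
    maxMul (maxMul A B) C = maxMul A (maxMul B C) := by
  funext i j
  exact congrFun (maxVec_maxMul (A := A) (B := B) (x := fun k => C k j) hA
    (fun k => hC k j)) i

lemma prodSet_nonneg {Ψ : Set (Fin n → Fin n → ℝ)} (hΨ : ∀ A ∈ Ψ, ∀ i j, 0 ≤ A i j) :
    ∀ m, ∀ B ∈ prodSet Ψ m, ∀ i j, 0 ≤ B i j := by
  intro m
  induction m with
  | zero =>
    intro B hB i j
    simp only [prodSet, Set.mem_singleton_iff] at hB
    subst hB
    unfold idMat; split <;> norm_num
  | succ m ih =>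
    rintro B hB i j
    obtain ⟨A, hA, B', hB', rfl⟩ := hB
    haveI : Nonempty (Fin n) := ⟨i⟩
    exact le_trans (mul_nonneg (hΨ A hA i i) (ih B' hB' i j))
      (le_fin_ciSup (fun k => A i k * B' k j) i)

lemma prodSet_mul_right {Ψ : Set (Fin n → Fin n → ℝ)} (hΨ : ∀ A ∈ Ψ, ∀ i j, 0 ≤ A i j) :
    ∀ m, ∀ B ∈ prodSet Ψ m, ∀ A ∈ Ψ, maxMul B A ∈ prodSet Ψ (m + 1) := by
  intro m
  induction m with
  | zero =>
    intro B hB A hA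
    simp only [prodSet, Set.mem_singleton_iff] at hB
    subst hB
    exact ⟨A, hA, idMat n, rfl, by
      rw [maxMul_idMat_left (hΨ A hA), maxMul_idMat_right (hΨ A hA)]⟩
  | succ m ih =>
    rintro B hB A hA
    obtain ⟨A', hA', B', hB', rfl⟩ := hB
    exact ⟨A', hA', maxMul B' A, ih B' hB' A hA,
      maxMul_assoc (hΨ A' hA') (hΨ A hA)⟩

lemma NormOn.zero (N : NormOn n) : N.f 0 = 0 := (N.eq_zero 0).mpr rfl

lemma NormOn.nonneg (N : NormOn n) (x : Fin n → ℝ) : 0 ≤ N.f x := by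
  have h1 : N.f (-x) = N.f x := by
    have := N.smul (-1) x; simpa using this
  have h2 := N.add x (-x)
  rw [add_neg_cancel, N.zero, h1] at h2
  linarith

end MaxAlg

namespace MaxAlg

lemma forward_norm {n : ℕ} [Nonempty (Fin n)] (Ψ : Set (Fin n → Fin n → ℝ))
    (hΨ : ∀ A ∈ Ψ, ∀ i j, 0 ≤ A i j)
    (hU : Bornology.IsBounded (⋃ m, prodSet Ψ m)) :
    ∃ N : NormOn n, N.Mono ∧ ∀ A ∈ Ψ, eta N A ≤ 1 := by
  classical
  set S : Set (Fin n → Fin n → ℝ) := ⋃ m, prodSet Ψ m with hSdef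
  have hIS : idMat n ∈ S := Set.mem_iUnion.mpr ⟨0, by simp [prodSet]⟩
  haveI hne : Nonempty ↥S := ⟨⟨idMat n, hIS⟩⟩
  have hSn : ∀ B ∈ S, ∀ i j, 0 ≤ B i j := by
    intro B hB
    obtain ⟨m, hm⟩ := Set.mem_iUnion.mp hB
    exact prodSet_nonneg hΨ m B hm
  have hSmul : ∀ B ∈ S, ∀ A ∈ Ψ, maxMul B A ∈ S := by
    intro B hB A hA
    obtain ⟨m, hm⟩ := Set.mem_iUnion.mp hB
    exact Set.mem_iUnion.mpr ⟨m + 1, prodSet_mul_right hΨ m B hm A hA⟩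
  obtain ⟨C, hC⟩ := isBounded_iff_forall_norm_le.mp hU
  have hC0 : ∀ B ∈ S, ∀ i j, B i j ≤ max C 0 := by
    intro B hB i j
    calc B i j ≤ |B i j| := le_abs_self _
      _ = ‖B i j‖ := (Real.norm_eq_abs _).symm
      _ ≤ ‖B i‖ := norm_le_pi_norm (B i) j
      _ ≤ ‖B‖ := norm_le_pi_norm B i
      _ ≤ C := hC B hB
      _ ≤ max C 0 := le_max_left _ _
  have habs : ∀ (x : Fin n → ℝ) (i : Fin n), |x i| ≤ ⨆ k, |x k| :=
    fun x i => le_fin_ciSup (fun k => |x k|) i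
  have hs0 : ∀ x : Fin n → ℝ, 0 ≤ ⨆ k, |x k| :=
    fun x => le_trans (abs_nonneg _) (habs x (Classical.arbitrary _))
  have hT1 : ∀ B ∈ S, ∀ x : Fin n → ℝ,
      (⨆ i, maxVec B (fun k => |x k|) i) ≤ max C 0 * ⨆ k, |x k| := by
    intro B hB x
    refine ciSup_le fun i => ?_
    show (⨆ j, B i j * |x j|) ≤ _
    exact ciSup_le fun j =>
      mul_le_mul (hC0 B hB i j) (habs x j) (abs_nonneg _) (le_max_right _ _)
  have hbdd : ∀ x : Fin n → ℝ,
      BddAbove (Set.range fun B : S => ⨆ i, maxVec B.1 (fun k => |x k|) i) := by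
    intro x
    refine ⟨max C 0 * ⨆ k, |x k|, ?_⟩
    rintro r ⟨B, rfl⟩
    exact hT1 B.1 B.2 x
  have hTid : ∀ x : Fin n → ℝ,
      (⨆ i, maxVec (idMat n) (fun k => |x k|) i) = ⨆ k, |x k| := by
    intro x
    rw [maxVec_idMat (fun k => abs_nonneg (x k))]
  have hsF : ∀ x : Fin n → ℝ,
      (⨆ k, |x k|) ≤ ⨆ B : S, ⨆ i, maxVec B.1 (fun k => |x k|) i := by
    intro x
    have := le_ciSup (hbdd x) (⟨idMat n, hIS⟩ : S)
    rwa [hTid x] at this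
  have hFle : ∀ x : Fin n → ℝ,
      (⨆ B : S, ⨆ i, maxVec B.1 (fun k => |x k|) i) ≤ max C 0 * ⨆ k, |x k| :=
    fun x => ciSup_le fun B => hT1 B.1 B.2 x
  refine ⟨⟨fun x => ⨆ B : S, ⨆ i, maxVec B.1 (fun k => |x k|) i, ?_, ?_, ?_⟩, ?_, ?_⟩
  · -- eq_zero
    intro x
    constructor
    · intro h
      funext i
      have h1 : (⨆ k, |x k|) ≤ 0 := le_of_le_of_eq (hsF x) h
      have h2 := le_trans (habs x i) h1
      simpa [abs_nonpos_iff] using h2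
    · rintro rfl
      apply le_antisymm
      · have := hFle 0
        simpa using this
      · exact le_trans (hs0 0) (hsF 0)
  · -- smul
    intro a x
    show (⨆ B : S, ⨆ i, maxVec B.1 (fun k => |(a • x) k|) i)
        = |a| * ⨆ B : S, ⨆ i, maxVec B.1 (fun k => |x k|) i
    rw [Real.mul_iSup_of_nonneg (abs_nonneg a)]
    refine iSup_congr fun B => ?_
    rw [Real.mul_iSup_of_nonneg (abs_nonneg a)]
    refine iSup_congr fun i => ?_
    show (⨆ j, B.1 i j * |(a • x) j|) = |a| * ⨆ j, B.1 i j * |x j|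
    rw [Real.mul_iSup_of_nonneg (abs_nonneg a)]
    refine iSup_congr fun j => ?_
    rw [Pi.smul_apply, smul_eq_mul, abs_mul]
    ring
  · -- add
    intro x y
    refine ciSup_le fun B => ?_
    refine le_trans ?_ (add_le_add (le_ciSup (hbdd x) B) (le_ciSup (hbdd y) B))
    refine ciSup_le fun i => ?_
    refine le_trans ?_
      (add_le_add (le_fin_ciSup (fun i' => maxVec B.1 (fun k => |x k|) i') i)
        (le_fin_ciSup (fun i' => maxVec B.1 (fun k => |y k|) i') i))
    show (⨆ j, B.1 i j * |(x + y) j|) ≤ _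
    refine ciSup_le fun j => ?_
    have h1 : B.1 i j * |(x + y) j| ≤ B.1 i j * |x j| + B.1 i j * |y j| := by
      rw [← mul_add]
      exact mul_le_mul_of_nonneg_left (abs_add_le (x j) (y j)) (hSn B.1 B.2 i j)
    exact le_trans h1
      (add_le_add (le_fin_ciSup (fun j' => B.1 i j' * |x j'|) j)
        (le_fin_ciSup (fun j' => B.1 i j' * |y j'|) j))
  · -- Mono
    intro x y hxy
    refine ciSup_le fun B => ?_
    refine le_trans ?_ (le_ciSup (hbdd y) B)
    refine ciSup_le fun i => ?_
    refine le_trans ?_ (le_fin_ciSup (fun i' => maxVec B.1 (fun k => |y k|) i') i)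
    show (⨆ j, B.1 i j * |x j|) ≤ _
    refine ciSup_le fun j => ?_
    exact le_trans (mul_le_mul_of_nonneg_left (hxy j) (hSn B.1 B.2 i j))
      (le_fin_ciSup (fun j' => B.1 i j' * |y j'|) j)
  · -- eta ≤ 1
    intro A hA
    unfold eta
    refine Real.iSup_le (fun v => ?_) zero_le_one
    obtain ⟨v, hv0, hvne⟩ := v
    have hFpos : 0 < ⨆ B : S, ⨆ i, maxVec B.1 (fun k => |v k|) i := by
      obtain ⟨i, hi⟩ := Function.ne_iff.mp hvne
      have hi' : v i ≠ 0 := hi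
      have h2 : 0 < |v i| := abs_pos.mpr hi'
      exact lt_of_lt_of_le (lt_of_lt_of_le h2 (habs v i)) (hsF v)
    refine div_le_one_of_le₀ ?_ hFpos.le
    have hw : (fun k => |maxVec A v k|) = maxVec A v :=
      funext fun k => abs_of_nonneg (maxVec_nonneg (hΨ A hA) hv0 k)
    have hvv : (fun k => |v k|) = v := funext fun k => abs_of_nonneg (hv0 k)
    show (⨆ B : S, ⨆ i, maxVec B.1 (fun k => |maxVec A v k|) i) ≤ _
    refine ciSup_le fun B => ?_
    have key : (⨆ i, maxVec B.1 (fun k => |maxVec A v k|) i)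
        = ⨆ i, maxVec (maxMul B.1 A) (fun k => |v k|) i := by
      rw [hw, hvv, maxVec_maxMul (hSn B.1 B.2) hv0]
    rw [key]
    exact le_ciSup (hbdd v) ⟨maxMul B.1 A, hSmul B.1 B.2 A hA⟩

lemma backward_bounded {n : ℕ} [Nonempty (Fin n)] (Ψ : Set (Fin n → Fin n → ℝ))
    (hΨ : ∀ A ∈ Ψ, ∀ i j, 0 ≤ A i j) (N : NormOn n) (hM : N.Mono)
    (hη : ∀ A ∈ Ψ, eta N A ≤ 1) :
    Bornology.IsBounded (⋃ m, prodSet Ψ m) := by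
  classical
  obtain ⟨jm, hjm⟩ := Finite.exists_min fun j : Fin n => N.f (Pi.single j 1)
  have hcmin : 0 < N.f (Pi.single jm 1) := by
    rcases lt_or_eq_of_le (N.nonneg (Pi.single jm 1)) with h | h
    · exact h
    · exfalso
      have h1 := (N.eq_zero (Pi.single jm 1)).mp h.symm
      have h2 := congrFun h1 jm
      simp at h2
  obtain ⟨jM, hjM⟩ := Finite.exists_max fun j : Fin n => N.f (Pi.single j 1)
  have step1 : ∀ A ∈ Ψ, ∀ x : Fin n → ℝ, (∀ i, 0 ≤ x i) →
      N.f (maxVec A x) ≤ N.f x := by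
    intro A hA x hx
    rcases eq_or_ne x 0 with rfl | hxne
    · have h1 : maxVec A (0 : Fin n → ℝ) = 0 := by
        funext i
        show (⨆ j, A i j * (0 : Fin n → ℝ) j) = 0
        simp
      rw [h1, N.zero]
    · have hNpos : 0 < N.f x := by
        rcases lt_or_eq_of_le (N.nonneg x) with h | h
        · exact h
        · exact absurd ((N.eq_zero x).mp h.symm) hxne
      rw [← div_le_one hNpos]
      refine le_trans ?_ (hη A hA)
      unfold eta
      have hbddr : BddAbove (Set.range fun v : {x : Fin n → ℝ // (∀ i, 0 ≤ x i) ∧ x ≠ 0} =>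
          N.f (maxVec A v.1) / N.f v.1) := by
        refine ⟨(⨆ p : Fin n × Fin n, A p.1 p.2) * N.f (fun _ => 1) / N.f (Pi.single jm 1), ?_⟩
        rintro r ⟨⟨v, hv0, hvne⟩, rfl⟩
        set M := ⨆ p : Fin n × Fin n, A p.1 p.2 with hMdef
        have hMb : ∀ i j, A i j ≤ M := fun i j => by
          rw [hMdef]
          exact le_ciSup (f := fun p : Fin n × Fin n => A p.1 p.2)
            (Set.finite_range _).bddAbove (i, j)
        have hM0 : 0 ≤ M :=
          le_trans (hΨ A hA (Classical.arbitrary _) (Classical.arbitrary _)) (hMb _ _)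
        obtain ⟨j0, hj0⟩ := Finite.exists_max v
        have hspos : 0 < v j0 := by
          obtain ⟨i, hi⟩ := Function.ne_iff.mp hvne
          have hi' : v i ≠ 0 := hi
          exact lt_of_lt_of_le (lt_of_le_of_ne (hv0 i) (Ne.symm hi')) (hj0 i)
        have hnum : N.f (maxVec A v) ≤ M * v j0 * N.f (fun _ => 1) := by
          have h1 : N.f (maxVec A v) ≤ N.f ((M * v j0) • fun _ => (1:ℝ)) := by
            refine hM _ _ fun i => ?_
            rw [abs_of_nonneg (maxVec_nonneg (hΨ A hA) hv0 i)]
            have h2 : maxVec A v i ≤ M * v j0 := by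
              show (⨆ j, A i j * v j) ≤ _
              exact ciSup_le fun j => mul_le_mul (hMb i j) (hj0 j) (hv0 j) hM0
            refine le_trans h2 ?_
            rw [Pi.smul_apply, smul_eq_mul, mul_one]
            exact le_abs_self _
          rwa [N.smul, abs_of_nonneg (mul_nonneg hM0 hspos.le)] at h1
        have hden : v j0 * N.f (Pi.single jm 1) ≤ N.f v := by
          have h1 : N.f ((v j0) • (Pi.single j0 (1:ℝ) : Fin n → ℝ)) ≤ N.f v := by
            refine hM _ _ fun i => ?_
            rcases eq_or_ne i j0 with h | h
            · simp [h, Pi.single_apply]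
            · simp [Pi.single_apply, h, abs_nonneg]
          rw [N.smul, abs_of_nonneg hspos.le] at h1
          exact le_trans (mul_le_mul_of_nonneg_left (hjm j0) hspos.le) h1
        calc N.f (maxVec A v) / N.f v
            ≤ (M * v j0 * N.f (fun _ => 1)) / (v j0 * N.f (Pi.single jm 1)) :=
              div_le_div₀ (mul_nonneg (mul_nonneg hM0 hspos.le) (N.nonneg _)) hnum
                (mul_pos hspos hcmin) hden
          _ = M * N.f (fun _ => 1) / N.f (Pi.single jm 1) := by
              rw [show M * v j0 * N.f (fun _ => (1:ℝ))
                    = M * N.f (fun _ => (1:ℝ)) * v j0 by ring,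
                  show v j0 * N.f (Pi.single jm (1:ℝ))
                    = N.f (Pi.single jm (1:ℝ)) * v j0 by ring,
                  mul_div_mul_right _ _ hspos.ne']
      exact le_ciSup hbddr (⟨x, hx, hxne⟩ : {x : Fin n → ℝ // (∀ i, 0 ≤ x i) ∧ x ≠ 0})
  have step2 : ∀ m, ∀ B ∈ prodSet Ψ m, ∀ x : Fin n → ℝ, (∀ i, 0 ≤ x i) →
      N.f (maxVec B x) ≤ N.f x := by
    intro m
    induction m with
    | zero =>
      intro B hB x hx
      simp only [prodSet, Set.mem_singleton_iff] at hB
      subst hB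
      rw [maxVec_idMat hx]
    | succ m ih =>
      rintro B hB x hx
      obtain ⟨A, hA, B', hB', rfl⟩ := hB
      rw [maxVec_maxMul (hΨ A hA) hx]
      exact le_trans
        (step1 A hA _ (maxVec_nonneg (prodSet_nonneg hΨ m B' hB') hx))
        (ih B' hB' x hx)
  have entry : ∀ m, ∀ B ∈ prodSet Ψ m, ∀ i j,
      B i j ≤ N.f (Pi.single jM 1) / N.f (Pi.single jm 1) := by
    intro m B hB i j
    have hBnn := prodSet_nonneg hΨ m B hB
    have hx : ∀ k, (0:ℝ) ≤ (Pi.single j (1:ℝ) : Fin n → ℝ) k := fun k => by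
      rcases eq_or_ne k j with h | h <;> simp [Pi.single_apply, h]
    have h1 := step2 m B hB (Pi.single j 1) hx
    rw [le_div_iff₀ hcmin]
    have h2 : B i j * N.f (Pi.single jm 1) ≤ N.f (maxVec B (Pi.single j 1)) := by
      have h3 : N.f ((B i j) • (Pi.single i (1:ℝ) : Fin n → ℝ)) ≤ N.f (maxVec B (Pi.single j 1)) := by
        refine hM _ _ fun k => ?_
        have hcol : maxVec B (Pi.single j 1) k = B k j := by
          show (⨆ l, B k l * (Pi.single j (1:ℝ) : Fin n → ℝ) l) = B k j
          haveI : Nonempty (Fin n) := ⟨k⟩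
          apply le_antisymm
          · refine ciSup_le fun l => ?_
            rcases eq_or_ne l j with h | h
            · simp [Pi.single_apply, h]
            · simp [Pi.single_apply, h, hBnn k j]
          · have := le_fin_ciSup (fun l => B k l * (Pi.single j (1:ℝ) : Fin n → ℝ) l) j
            simpa using this
        rw [hcol]
        rcases eq_or_ne k i with h | h
        · simp [h, Pi.single_apply]
        · simp [Pi.single_apply, h, abs_nonneg]
      rw [N.smul, abs_of_nonneg (hBnn i j)] at h3
      exact le_trans (mul_le_mul_of_nonneg_left (hjm i) (hBnn i j)) h3
    exact le_trans h2 (le_trans h1 (hjM j))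
  rw [isBounded_iff_forall_norm_le]
  refine ⟨max (N.f (Pi.single jM 1) / N.f (Pi.single jm 1)) 0, ?_⟩
  intro B hB
  obtain ⟨m, hm⟩ := Set.mem_iUnion.mp hB
  rw [pi_norm_le_iff_of_nonneg (le_max_right _ _)]
  intro i
  rw [pi_norm_le_iff_of_nonneg (le_max_right _ _)]
  intro j
  rw [Real.norm_eq_abs, abs_of_nonneg (prodSet_nonneg hΨ m B hm i j)]
  exact le_trans (entry m B hm i j) (le_max_left _ _)

end MaxAlg

namespace MaxAlg
/-- the semigroup generated by Ψ is bounded iff there is a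
monotone norm with η(A) ≤ 1 for all A ∈ Ψ. -/
theorem semigroup_bounded_iff {n : ℕ} (Ψ : Set (Fin n → Fin n → ℝ))
    (hb : Bornology.IsBounded Ψ) (hΨ : ∀ A ∈ Ψ, ∀ i j, 0 ≤ A i j) :
    Bornology.IsBounded (⋃ m : ℕ, prodSet Ψ m) ↔
      ∃ N : NormOn n, N.Mono ∧ ∀ A ∈ Ψ, eta N A ≤ 1 := by
  rcases isEmpty_or_nonempty (Fin n) with he | hne
  · constructor
    · intro _
      refine ⟨⟨fun _ => 0, fun x => ⟨fun _ => funext fun i => he.elim i, fun _ => rfl⟩,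
        fun a x => by simp, fun x y => by norm_num⟩, fun x y _ => le_rfl, ?_⟩
      intro A hA
      haveI hie : IsEmpty {x : Fin n → ℝ // (∀ i, 0 ≤ x i) ∧ x ≠ 0} :=
        ⟨fun x => x.2.2 (funext fun i => he.elim i)⟩
      unfold eta
      exact Real.iSup_le (fun x => (hie.false x).elim) zero_le_one
    · intro _
      rw [isBounded_iff_forall_norm_le]
      exact ⟨0, fun B _ => (pi_norm_le_iff_of_nonneg le_rfl).mpr fun i => he.elim i⟩
  · constructor
    · exact fun hU => forward_norm Ψ hΨ hU
    · rintro ⟨N, hMo, hη⟩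
      exact backward_bounded Ψ hΨ N hMo hη

end MaxAlg
end

section
/- The maximal cycle geometric mean μ : ℝ₊^{n×n} → ℝ₊ is locally Lipschitz continuous on the set {A ∈ ℝ₊^{n×n} : μ(A) > 0}. -/
open scoped BigOperators

namespace MaxAlg
lemma abs_prod_sub_prod_le {ι : Type*} (s : Finset ι) (f g : ι → ℝ) (M : ℝ) (hM : 1 ≤ M)
    (hf0 : ∀ i ∈ s, 0 ≤ f i) (hfM : ∀ i ∈ s, f i ≤ M)
    (hg0 : ∀ i ∈ s, 0 ≤ g i) (hgM : ∀ i ∈ s, g i ≤ M) :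
    |∏ i ∈ s, f i - ∏ i ∈ s, g i| ≤ M ^ s.card * ∑ i ∈ s, |f i - g i| := by
  induction s using Finset.cons_induction with
  | empty => simp
  | cons a s ha ih =>
    simp only [Finset.prod_cons, Finset.sum_cons, Finset.card_cons]
    have hf0' : ∀ i ∈ s, 0 ≤ f i := fun i hi => hf0 i (Finset.mem_cons_of_mem hi)
    have hfM' : ∀ i ∈ s, f i ≤ M := fun i hi => hfM i (Finset.mem_cons_of_mem hi)
    have hg0' : ∀ i ∈ s, 0 ≤ g i := fun i hi => hg0 i (Finset.mem_cons_of_mem hi)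
    have hgM' : ∀ i ∈ s, g i ≤ M := fun i hi => hgM i (Finset.mem_cons_of_mem hi)
    have h1 := ih hf0' hfM' hg0' hgM'
    have hPf : ∏ i ∈ s, f i ≤ M ^ s.card := by
      calc ∏ i ∈ s, f i ≤ ∏ _i ∈ s, M := Finset.prod_le_prod hf0' hfM'
        _ = M ^ s.card := Finset.prod_const M
    have hPf0 : 0 ≤ ∏ i ∈ s, f i := Finset.prod_nonneg hf0'
    have hga0 : 0 ≤ g a := hg0 a (Finset.mem_cons_self a s)
    have hgaM : g a ≤ M := hgM a (Finset.mem_cons_self a s)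
    have hMs : (1:ℝ) ≤ M ^ s.card := one_le_pow₀ hM
    have key : f a * ∏ i ∈ s, f i - g a * ∏ i ∈ s, g i
        = (f a - g a) * ∏ i ∈ s, f i + g a * (∏ i ∈ s, f i - ∏ i ∈ s, g i) := by ring
    have habs : |f a * ∏ i ∈ s, f i - g a * ∏ i ∈ s, g i|
        ≤ |f a - g a| * (∏ i ∈ s, f i) + g a * |∏ i ∈ s, f i - ∏ i ∈ s, g i| := by
      rw [key]
      calc |(f a - g a) * ∏ i ∈ s, f i + g a * (∏ i ∈ s, f i - ∏ i ∈ s, g i)|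
          ≤ |(f a - g a) * ∏ i ∈ s, f i| + |g a * (∏ i ∈ s, f i - ∏ i ∈ s, g i)| :=
            abs_add_le _ _
        _ = |f a - g a| * (∏ i ∈ s, f i) + g a * |∏ i ∈ s, f i - ∏ i ∈ s, g i| := by
            rw [abs_mul, abs_mul, abs_of_nonneg hPf0, abs_of_nonneg hga0]
    refine habs.trans ?_
    have e1 : |f a - g a| * (∏ i ∈ s, f i) ≤ M ^ (s.card + 1) * |f a - g a| := by
      rw [pow_succ]
      calc |f a - g a| * (∏ i ∈ s, f i) ≤ |f a - g a| * M ^ s.card :=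
            mul_le_mul_of_nonneg_left hPf (abs_nonneg _)
        _ ≤ M ^ s.card * M * |f a - g a| := by
            have hle : M ^ s.card ≤ M ^ s.card * M :=
              le_mul_of_one_le_right (pow_nonneg (zero_le_one.trans hM) _) hM
            nlinarith [abs_nonneg (f a - g a)]
    have e2 : g a * |∏ i ∈ s, f i - ∏ i ∈ s, g i|
        ≤ M ^ (s.card + 1) * ∑ i ∈ s, |f i - g i| := by
      rw [pow_succ]
      calc g a * |∏ i ∈ s, f i - ∏ i ∈ s, g i|
          ≤ M * (M ^ s.card * ∑ i ∈ s, |f i - g i|) := by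
            apply mul_le_mul hgaM h1 (abs_nonneg _) (le_trans zero_le_one hM)
        _ = M ^ s.card * M * ∑ i ∈ s, |f i - g i| := by ring
    calc |f a - g a| * (∏ i ∈ s, f i) + g a * |∏ i ∈ s, f i - ∏ i ∈ s, g i|
        ≤ M ^ (s.card + 1) * |f a - g a| + M ^ (s.card + 1) * ∑ i ∈ s, |f i - g i| :=
          add_le_add e1 e2
      _ = M ^ (s.card + 1) * (|f a - g a| + ∑ i ∈ s, |f i - g i|) := by ring

lemma rpow_sub_rpow_le {a b e : ℝ} (hb : 0 ≤ b) (hba : b ≤ a) (ha : 0 < a)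
    (he0 : 0 < e) (he1 : e ≤ 1) :
    a ^ e - b ^ e ≤ (a - b) * a ^ (e - 1) := by
  have ht0 : 0 ≤ b / a := div_nonneg hb ha.le
  have ht1 : b / a ≤ 1 := (div_le_one ha).2 hba
  have key : b / a ≤ (b / a) ^ e := by
    rcases eq_or_lt_of_le ht0 with h | h
    · rw [← h, Real.zero_rpow he0.ne']
    · calc b / a = (b / a) ^ (1:ℝ) := (Real.rpow_one _).symm
        _ ≤ (b / a) ^ e := Real.rpow_le_rpow_of_exponent_ge h ht1 he1
  have hbe : a ^ e * (b / a) ≤ b ^ e := by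
    calc a ^ e * (b / a) ≤ a ^ e * (b / a) ^ e :=
          mul_le_mul_of_nonneg_left key (Real.rpow_nonneg ha.le e)
      _ = (a * (b / a)) ^ e := (Real.mul_rpow ha.le ht0).symm
      _ = b ^ e := by rw [mul_div_cancel₀ _ ha.ne']
  have hrw : a ^ (e - 1) = a ^ e / a := by rw [Real.rpow_sub ha, Real.rpow_one]
  rw [hrw]
  have h2 : (a - b) * (a ^ e / a) = a ^ e - a ^ e * (b / a) := by
    field_simp
  rw [h2]
  linarith



lemma cycleTerm_le_mu (B : Fin n → Fin n → ℝ) (k : Fin n)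
    (c : {f : Fin (k.1 + 1) → Fin n // Function.Injective f}) :
    (∏ j : Fin (k.1 + 1), B (c.1 j) (c.1 (j + 1))) ^ ((1 : ℝ) / ((k.1 : ℝ) + 1)) ≤ mu B := by
  have h1 : (∏ j : Fin (k.1 + 1), B (c.1 j) (c.1 (j + 1))) ^ ((1 : ℝ) / ((k.1 : ℝ) + 1))
      ≤ ⨆ c' : {f : Fin (k.1 + 1) → Fin n // Function.Injective f},
        (∏ j : Fin (k.1 + 1), B (c'.1 j) (c'.1 (j + 1))) ^ ((1 : ℝ) / ((k.1 : ℝ) + 1)) :=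
    le_ciSup (f := fun c' : {f : Fin (k.1 + 1) → Fin n // Function.Injective f} =>
      (∏ j : Fin (k.1 + 1), B (c'.1 j) (c'.1 (j + 1))) ^ ((1 : ℝ) / ((k.1 : ℝ) + 1)))
      ((Set.finite_range _).bddAbove) c
  exact h1.trans (le_ciSup (f := fun k' : Fin n =>
      ⨆ c' : {f : Fin (k'.1 + 1) → Fin n // Function.Injective f},
        (∏ j : Fin (k'.1 + 1), B (c'.1 j) (c'.1 (j + 1))) ^ ((1 : ℝ) / ((k'.1 : ℝ) + 1)))
      ((Set.finite_range _).bddAbove) k)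

lemma exists_mu_eq (hn : 0 < n) (B : Fin n → Fin n → ℝ) :
    ∃ (k : Fin n) (c : {f : Fin (k.1 + 1) → Fin n // Function.Injective f}),
      mu B = (∏ j : Fin (k.1 + 1), B (c.1 j) (c.1 (j + 1))) ^ ((1 : ℝ) / ((k.1 : ℝ) + 1)) := by
  haveI : Nonempty (Fin n) := ⟨⟨0, hn⟩⟩
  obtain ⟨k, hk⟩ := exists_eq_ciSup_of_finite
    (f := fun k : Fin n => ⨆ c : {f : Fin (k.1 + 1) → Fin n // Function.Injective f},
      (∏ j : Fin (k.1 + 1), B (c.1 j) (c.1 (j + 1))) ^ ((1 : ℝ) / ((k.1 : ℝ) + 1)))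
  haveI : Nonempty {f : Fin (k.1 + 1) → Fin n // Function.Injective f} :=
    ⟨⟨Fin.castLE k.2, Fin.castLE_injective _⟩⟩
  obtain ⟨c, hc⟩ := exists_eq_ciSup_of_finite
    (f := fun c : {f : Fin (k.1 + 1) → Fin n // Function.Injective f} =>
      (∏ j : Fin (k.1 + 1), B (c.1 j) (c.1 (j + 1))) ^ ((1 : ℝ) / ((k.1 : ℝ) + 1)))
  exact ⟨k, c, by rw [mu, ← hk, ← hc]⟩



/-- μ is locally Lipschitz on {A ∈ ℝ₊^{n×n} : μ(A) > 0}. -/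
theorem mu_locally_lipschitz {n : ℕ} (A : Fin n → Fin n → ℝ)
    (hA : ∀ i j, 0 ≤ A i j) (hμ : 0 < mu A) :
    ∃ ε > (0 : ℝ), ∃ K : ℝ, 0 ≤ K ∧
      ∀ B C : Fin n → Fin n → ℝ, B ∈ Metric.ball A ε → C ∈ Metric.ball A ε →
        (∀ i j, 0 ≤ B i j) → (∀ i j, 0 ≤ C i j) →
        |mu B - mu C| ≤ K * dist B C := by
  rcases Nat.eq_zero_or_pos n with hn0 | hn
  · exfalso
    subst hn0
    rw [mu, Real.iSup_of_isEmpty] at hμ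
    exact lt_irrefl 0 hμ
  haveI : Nonempty (Fin n) := ⟨⟨0, hn⟩⟩
  -- bound on entries of A
  set M0 : ℝ := Finset.univ.sup' Finset.univ_nonempty (fun p : Fin n × Fin n => A p.1 p.2) with hM0def
  have hM0 : ∀ i j, A i j ≤ M0 := fun i j => Finset.le_sup' (f := fun p : Fin n × Fin n => A p.1 p.2) (Finset.mem_univ (i, j))
  have hM00 : 0 ≤ M0 := le_trans (hA ⟨0, hn⟩ ⟨0, hn⟩) (hM0 _ _)
  set M : ℝ := M0 + 1 with hMdef
  have hM1 : (1 : ℝ) ≤ M := by simp [hMdef]; linarith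
  have hM0' : (0 : ℝ) ≤ M := zero_le_one.trans hM1
  -- the maximizing cycle of A
  obtain ⟨k0, c0, hk0⟩ := exists_mu_eq hn A
  set a : ℝ := mu A with hadef
  set a' : ℝ := min a 1 with ha'def
  have ha' : 0 < a' := lt_min hμ one_pos
  have ha'1 : a' ≤ 1 := min_le_right _ _
  have ha'a : a' ≤ a := min_le_left _ _
  set δ : ℝ := a' / 2 with hδdef
  have hδ0 : 0 < δ := by positivity
  have hδ1 : δ ≤ 1 := by rw [hδdef]; linarith
  set L : ℝ := (n : ℝ) * M ^ n with hLdef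
  have hL : 0 < L := mul_pos (by exact_mod_cast hn) (pow_pos (lt_of_lt_of_le one_pos hM1) n)
  set ε : ℝ := min 1 (δ ^ n / L) with hεdef
  have hε0 : 0 < ε := lt_min one_pos (div_pos (pow_pos hδ0 n) hL)
  have hε1 : ε ≤ 1 := min_le_left _ _
  have hεL : ε ≤ δ ^ n / L := min_le_right _ _
  set K : ℝ := L * δ ^ ((1 : ℝ) - (n : ℝ)) with hKdef
  have hK0 : 0 ≤ K := mul_nonneg hL.le (Real.rpow_nonneg hδ0.le _)
  -- entries of matrices in the ball are bounded by M
  have hentry : ∀ B : Fin n → Fin n → ℝ, B ∈ Metric.ball A ε → ∀ i j, B i j ≤ M := by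
    intro B hB i j
    have h1 : dist (B i j) (A i j) ≤ dist B A :=
      le_trans (dist_le_pi_dist (B i) (A i) j) (dist_le_pi_dist B A i)
    have h2 : dist B A < ε := Metric.mem_ball.1 hB
    rw [Real.dist_eq] at h1
    have h3 := (abs_le.1 (h1.trans ((le_of_lt h2).trans hε1))).2
    have := hM0 i j
    simp only [hMdef]
    linarith
  -- products over a cycle are Lipschitz
  have hprod : ∀ B C : Fin n → Fin n → ℝ, B ∈ Metric.ball A ε → C ∈ Metric.ball A ε →
      (∀ i j, 0 ≤ B i j) → (∀ i j, 0 ≤ C i j) → ∀ (k : Fin n)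
      (c : {f : Fin (k.1 + 1) → Fin n // Function.Injective f}),
      |(∏ j : Fin (k.1 + 1), B (c.1 j) (c.1 (j + 1))) -
        ∏ j : Fin (k.1 + 1), C (c.1 j) (c.1 (j + 1))| ≤ L * dist B C := by
    intro B C hB hC hBnn hCnn k c
    have hentB := hentry B hB
    have hentC := hentry C hC
    have h := abs_prod_sub_prod_le (Finset.univ : Finset (Fin (k.1 + 1)))
      (fun j => B (c.1 j) (c.1 (j + 1))) (fun j => C (c.1 j) (c.1 (j + 1))) M hM1
      (fun j _ => hBnn _ _) (fun j _ => hentB _ _)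
      (fun j _ => hCnn _ _) (fun j _ => hentC _ _)
    have hd : ∀ j : Fin (k.1 + 1),
        |B (c.1 j) (c.1 (j + 1)) - C (c.1 j) (c.1 (j + 1))| ≤ dist B C := by
      intro j
      have h1 : dist (B (c.1 j) (c.1 (j + 1))) (C (c.1 j) (c.1 (j + 1)))
          ≤ dist (B (c.1 j)) (C (c.1 j)) := dist_le_pi_dist _ _ _
      have h2 : dist (B (c.1 j)) (C (c.1 j)) ≤ dist B C := dist_le_pi_dist B C _
      rw [Real.dist_eq] at h1
      linarith
    have hsum : ∑ j : Fin (k.1 + 1), |B (c.1 j) (c.1 (j + 1)) - C (c.1 j) (c.1 (j + 1))|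
        ≤ ((k.1 + 1 : ℕ) : ℝ) * dist B C := by
      calc ∑ j : Fin (k.1 + 1), |B (c.1 j) (c.1 (j + 1)) - C (c.1 j) (c.1 (j + 1))|
          ≤ ∑ _j : Fin (k.1 + 1), dist B C := Finset.sum_le_sum (fun j _ => hd j)
        _ = ((k.1 + 1 : ℕ) : ℝ) * dist B C := by
            rw [Finset.sum_const, nsmul_eq_mul]
            simp
    have hcard : (Finset.univ : Finset (Fin (k.1 + 1))).card = k.1 + 1 := by simp
    rw [hcard] at h
    have hmn : k.1 + 1 ≤ n := k.2
    have hpow : M ^ (k.1 + 1) ≤ M ^ n := pow_le_pow_right₀ hM1 hmn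
    have hcast : ((k.1 + 1 : ℕ) : ℝ) ≤ (n : ℝ) := Nat.cast_le.2 hmn
    have hdist0 : (0 : ℝ) ≤ dist B C := dist_nonneg
    calc |(∏ j : Fin (k.1 + 1), B (c.1 j) (c.1 (j + 1))) -
        ∏ j : Fin (k.1 + 1), C (c.1 j) (c.1 (j + 1))|
        ≤ M ^ (k.1 + 1) * ∑ j : Fin (k.1 + 1),
            |B (c.1 j) (c.1 (j + 1)) - C (c.1 j) (c.1 (j + 1))| := h
      _ ≤ M ^ (k.1 + 1) * (((k.1 + 1 : ℕ) : ℝ) * dist B C) :=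
          mul_le_mul_of_nonneg_left hsum (pow_nonneg hM0' _)
      _ ≤ M ^ n * ((n : ℝ) * dist B C) := by
          apply mul_le_mul hpow (mul_le_mul_of_nonneg_right hcast hdist0)
            (mul_nonneg (Nat.cast_nonneg _) hdist0) (pow_nonneg hM0' _)
      _ = L * dist B C := by rw [hLdef]; ring
  -- P A c0 = a ^ (k0.1 + 1)
  have hm0ne : (k0.1 + 1 : ℕ) ≠ 0 := Nat.succ_ne_zero _
  have he0cast : (1 : ℝ) / ((k0.1 : ℝ) + 1) = (((k0.1 + 1 : ℕ) : ℝ))⁻¹ := by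
    rw [one_div]; norm_num
  have hPA0 : 0 ≤ ∏ j : Fin (k0.1 + 1), A (c0.1 j) (c0.1 (j + 1)) :=
    Finset.prod_nonneg (fun j _ => hA _ _)
  have hPA : (∏ j : Fin (k0.1 + 1), A (c0.1 j) (c0.1 (j + 1))) = a ^ (k0.1 + 1) := by
    calc (∏ j : Fin (k0.1 + 1), A (c0.1 j) (c0.1 (j + 1)))
        = ((∏ j : Fin (k0.1 + 1), A (c0.1 j) (c0.1 (j + 1))) ^
            ((1 : ℝ) / ((k0.1 : ℝ) + 1))) ^ (k0.1 + 1) := by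
          rw [he0cast]
          exact (Real.rpow_inv_natCast_pow hPA0 hm0ne).symm
      _ = a ^ (k0.1 + 1) := by rw [← hk0]
  -- lower bound for mu on the ball
  have hmulb : ∀ B : Fin n → Fin n → ℝ, B ∈ Metric.ball A ε → (∀ i j, 0 ≤ B i j) →
      δ ≤ mu B := by
    intro B hB hBnn
    have habs := hprod A B (Metric.mem_ball_self hε0) hB hA hBnn k0 c0
    have hdAB : dist A B < ε := by rw [dist_comm]; exact Metric.mem_ball.1 hB
    have hLd : L * dist A B ≤ δ ^ n := by
      have : L * dist A B ≤ L * (δ ^ n / L) :=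
        mul_le_mul_of_nonneg_left (le_of_lt (lt_of_lt_of_le hdAB hεL)) hL.le
      rwa [mul_div_cancel₀ _ hL.ne'] at this
    have hPB : a ^ (k0.1 + 1) - δ ^ n ≤ ∏ j : Fin (k0.1 + 1), B (c0.1 j) (c0.1 (j + 1)) := by
      have h1 := (abs_le.1 (habs.trans hLd)).2
      rw [hPA] at h1
      linarith
    -- a ^ m0 - δ ^ n ≥ δ ^ m0
    have hm0n : k0.1 + 1 ≤ n := k0.2
    have hδn : δ ^ n ≤ δ ^ (k0.1 + 1) := pow_le_pow_of_le_one hδ0.le hδ1 hm0n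
    have h2δ : 2 * δ ≤ a := by rw [hδdef]; linarith
    have hapow : (2 * δ) ^ (k0.1 + 1) ≤ a ^ (k0.1 + 1) :=
      pow_le_pow_left₀ (by positivity) h2δ _
    have h2pow : 2 * δ ^ (k0.1 + 1) ≤ (2 * δ) ^ (k0.1 + 1) := by
      rw [mul_pow]
      have h21 : (2 : ℝ) ≤ 2 ^ (k0.1 + 1) := by
        calc (2 : ℝ) = 2 ^ 1 := (pow_one 2).symm
          _ ≤ 2 ^ (k0.1 + 1) := pow_le_pow_right₀ one_le_two (Nat.le_add_left 1 _)
      exact mul_le_mul_of_nonneg_right h21 (pow_nonneg hδ0.le _)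
    have hgeo : δ ^ (k0.1 + 1) ≤ a ^ (k0.1 + 1) - δ ^ n := by nlinarith
    have hPBδ : δ ^ (k0.1 + 1) ≤ ∏ j : Fin (k0.1 + 1), B (c0.1 j) (c0.1 (j + 1)) := by
      linarith
    have hstep : δ ≤ (∏ j : Fin (k0.1 + 1), B (c0.1 j) (c0.1 (j + 1))) ^
        ((1 : ℝ) / ((k0.1 : ℝ) + 1)) := by
      rw [he0cast]
      calc δ = (δ ^ (k0.1 + 1)) ^ (((k0.1 + 1 : ℕ) : ℝ))⁻¹ :=
            (Real.pow_rpow_inv_natCast hδ0.le hm0ne).symm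
        _ ≤ (∏ j : Fin (k0.1 + 1), B (c0.1 j) (c0.1 (j + 1))) ^ (((k0.1 + 1 : ℕ) : ℝ))⁻¹ :=
            Real.rpow_le_rpow (pow_nonneg hδ0.le _) hPBδ (by positivity)
    exact hstep.trans (cycleTerm_le_mu B k0 c0)
  -- one-sided Lipschitz estimate
  have hone : ∀ B C : Fin n → Fin n → ℝ, B ∈ Metric.ball A ε → C ∈ Metric.ball A ε →
      (∀ i j, 0 ≤ B i j) → (∀ i j, 0 ≤ C i j) → mu B - mu C ≤ K * dist B C := by
    intro B C hB hC hBnn hCnn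
    obtain ⟨k, c, hkc⟩ := exists_mu_eq hn B
    have hmne : (k.1 + 1 : ℕ) ≠ 0 := Nat.succ_ne_zero _
    have hecast : (1 : ℝ) / ((k.1 : ℝ) + 1) = (((k.1 + 1 : ℕ) : ℝ))⁻¹ := by
      rw [one_div]; norm_num
    set e : ℝ := (1 : ℝ) / ((k.1 : ℝ) + 1) with hedef
    have he0 : 0 < e := by rw [hedef]; positivity
    have he1 : e ≤ 1 := by
      rw [hedef, div_le_one (by positivity)]
      have : (0 : ℝ) ≤ (k.1 : ℝ) := Nat.cast_nonneg _
      linarith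
    set PB : ℝ := ∏ j : Fin (k.1 + 1), B (c.1 j) (c.1 (j + 1)) with hPBdef
    set PC : ℝ := ∏ j : Fin (k.1 + 1), C (c.1 j) (c.1 (j + 1)) with hPCdef
    have hPB0 : 0 ≤ PB := Finset.prod_nonneg (fun j _ => hBnn _ _)
    have hPC0 : 0 ≤ PC := Finset.prod_nonneg (fun j _ => hCnn _ _)
    have hμC : PC ^ e ≤ mu C := cycleTerm_le_mu C k c
    have hdist0 : (0 : ℝ) ≤ dist B C := dist_nonneg
    rcases le_or_gt PB PC with hle | hlt
    · have hBC : mu B ≤ mu C := by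
        rw [hkc]
        exact le_trans (Real.rpow_le_rpow hPB0 hle he0.le) hμC
      have := mul_nonneg hK0 hdist0
      linarith
    · have hδB : δ ≤ mu B := hmulb B hB hBnn
      have hBpos : 0 < mu B := lt_of_lt_of_le hδ0 hδB
      have hPBeq : PB = (mu B) ^ (k.1 + 1) := by
        rw [hkc, hecast]
        exact (Real.rpow_inv_natCast_pow hPB0 hmne).symm
      have hPBpos : 0 < PB := by rw [hPBeq]; positivity
      have hδm : δ ^ (k.1 + 1) ≤ PB := by
        rw [hPBeq]; exact pow_le_pow_left₀ hδ0.le hδB _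
      have step1 : mu B - mu C ≤ PB ^ e - PC ^ e := by
        rw [hkc]; linarith
      have step2 : PB ^ e - PC ^ e ≤ (PB - PC) * PB ^ (e - 1) :=
        rpow_sub_rpow_le hPC0 hlt.le hPBpos he0 he1
      -- PB ^ (e-1) ≤ δ ^ (1 - n)
      have he1' : e - 1 ≤ 0 := by linarith
      have h3a : PB ^ (e - 1) ≤ ((δ ^ (k.1 + 1) : ℝ)) ^ (e - 1) :=
        Real.rpow_le_rpow_of_nonpos (pow_pos hδ0 _) hδm he1'
      have h3b : ((δ ^ (k.1 + 1) : ℝ)) ^ (e - 1) = δ ^ ((((k.1 + 1 : ℕ) : ℝ)) * (e - 1)) := by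
        rw [← Real.rpow_natCast δ (k.1 + 1), ← Real.rpow_mul hδ0.le]
      have hme : (((k.1 + 1 : ℕ) : ℝ)) * (e - 1) = 1 - ((k.1 + 1 : ℕ) : ℝ) := by
        rw [hecast]
        have : (((k.1 + 1 : ℕ) : ℝ)) ≠ 0 := Nat.cast_ne_zero.2 hmne
        field_simp
      have h3c : δ ^ ((1 : ℝ) - ((k.1 + 1 : ℕ) : ℝ)) ≤ δ ^ ((1 : ℝ) - (n : ℝ)) := by
        apply Real.rpow_le_rpow_of_exponent_ge hδ0 hδ1
        have : ((k.1 + 1 : ℕ) : ℝ) ≤ (n : ℝ) := Nat.cast_le.2 k.2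
        linarith
      have h3 : PB ^ (e - 1) ≤ δ ^ ((1 : ℝ) - (n : ℝ)) := by
        rw [h3b, hme] at h3a
        exact h3a.trans h3c
      have step4 : PB - PC ≤ L * dist B C :=
        le_trans (le_abs_self _) (hprod B C hB hC hBnn hCnn k c)
      have hPBe1 : 0 ≤ PB ^ (e - 1) := Real.rpow_nonneg hPBpos.le _
      have hfin : (PB - PC) * PB ^ (e - 1) ≤ (L * dist B C) * δ ^ ((1 : ℝ) - (n : ℝ)) :=
        mul_le_mul step4 h3 hPBe1 (mul_nonneg hL.le hdist0)
      calc mu B - mu C ≤ PB ^ e - PC ^ e := step1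
        _ ≤ (PB - PC) * PB ^ (e - 1) := step2
        _ ≤ (L * dist B C) * δ ^ ((1 : ℝ) - (n : ℝ)) := hfin
        _ = K * dist B C := by rw [hKdef]; ring
  refine ⟨ε, hε0, K, hK0, ?_⟩
  intro B C hB hC hBnn hCnn
  rw [abs_sub_le_iff]
  refine ⟨hone B C hB hC hBnn hCnn, ?_⟩
  rw [dist_comm]
  exact hone C B hC hB hCnn hBnn

end MaxAlg
end

section
/- The maximal cycle geometric mean μ : ℝ₊^{n×n} → ℝ₊ is locally Hölder continuous of order 1/n on ℝ₊^{n×n}: for every bounded set U ⊆ ℝ₊^{n×n} there is C ≥ 0 with |μ(A) − μ(B)| ≤ C‖A − B‖^{1/n} for all A, B ∈ U. -/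
open scoped BigOperators

namespace MaxAlg

private lemma aux_rpow_add_le {x y p : ℝ} (hx : 0 ≤ x) (hy : 0 ≤ y) (hp : 0 ≤ p) (hp1 : p ≤ 1) :
    (x + y) ^ p ≤ x ^ p + y ^ p := by
  have h := NNReal.rpow_add_le_add_rpow x.toNNReal y.toNNReal hp hp1
  have h2 := NNReal.coe_le_coe.2 h
  simpa [NNReal.coe_rpow, Real.coe_toNNReal x hx, Real.coe_toNNReal y hy,
    Real.coe_toNNReal _ (add_nonneg hx hy), ← Real.toNNReal_add hx hy] using h2

private lemma aux_rpow_sub_le {x y p : ℝ} (hx : 0 ≤ x) (hy : 0 ≤ y) (hp : 0 ≤ p) (hp1 : p ≤ 1) :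
    x ^ p ≤ y ^ p + |x - y| ^ p := by
  have hxle : x ≤ y + |x - y| := by
    have := le_abs_self (x - y); linarith
  calc x ^ p ≤ (y + |x - y|) ^ p := Real.rpow_le_rpow hx hxle hp
    _ ≤ y ^ p + |x - y| ^ p := aux_rpow_add_le hy (abs_nonneg _) hp hp1

private lemma aux_prod_sub_le {ι : Type*} [DecidableEq ι] (s : Finset ι) (a b : ι → ℝ)
    {K e : ℝ} (hK : 1 ≤ K) (he : 0 ≤ e)
    (ha : ∀ j ∈ s, |a j| ≤ K) (hb : ∀ j ∈ s, |b j| ≤ K) (hab : ∀ j ∈ s, |a j - b j| ≤ e) :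
    |∏ j ∈ s, a j - ∏ j ∈ s, b j| ≤ s.card * K ^ s.card * e := by
  have hK0 : (0 : ℝ) ≤ K := zero_le_one.trans hK
  induction s using Finset.induction_on with
  | empty => simp
  | @insert i s hi ih =>
    have ha' : ∀ j ∈ s, |a j| ≤ K := fun j hj => ha j (Finset.mem_insert_of_mem hj)
    have hb' : ∀ j ∈ s, |b j| ≤ K := fun j hj => hb j (Finset.mem_insert_of_mem hj)
    have hab' : ∀ j ∈ s, |a j - b j| ≤ e := fun j hj => hab j (Finset.mem_insert_of_mem hj)
    have IH := ih ha' hb' hab'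
    have hPb : |∏ j ∈ s, b j| ≤ K ^ s.card := by
      rw [Finset.abs_prod]
      calc ∏ j ∈ s, |b j| ≤ ∏ _j ∈ s, K :=
            Finset.prod_le_prod (fun j _ => abs_nonneg _) hb'
        _ = K ^ s.card := Finset.prod_const K
    rw [Finset.prod_insert hi, Finset.prod_insert hi, Finset.card_insert_of_notMem hi]
    have heq : a i * ∏ j ∈ s, a j - b i * ∏ j ∈ s, b j
        = a i * (∏ j ∈ s, a j - ∏ j ∈ s, b j) + (a i - b i) * ∏ j ∈ s, b j := by ring
    have hai : |a i| ≤ K := ha i (Finset.mem_insert_self i s)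
    have habi : |a i - b i| ≤ e := hab i (Finset.mem_insert_self i s)
    have hpow : K ^ s.card ≤ K ^ (s.card + 1) := by
      calc K ^ s.card = K ^ s.card * 1 := (mul_one _).symm
        _ ≤ K ^ s.card * K := mul_le_mul_of_nonneg_left hK (pow_nonneg hK0 _)
        _ = K ^ (s.card + 1) := (pow_succ K s.card).symm
    calc |a i * ∏ j ∈ s, a j - b i * ∏ j ∈ s, b j|
        = |a i * (∏ j ∈ s, a j - ∏ j ∈ s, b j) + (a i - b i) * ∏ j ∈ s, b j| := by rw [heq]
      _ ≤ |a i * (∏ j ∈ s, a j - ∏ j ∈ s, b j)| + |(a i - b i) * ∏ j ∈ s, b j| := abs_add_le _ _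
      _ = |a i| * |∏ j ∈ s, a j - ∏ j ∈ s, b j| + |a i - b i| * |∏ j ∈ s, b j| := by
            rw [abs_mul, abs_mul]
      _ ≤ K * (s.card * K ^ s.card * e) + e * K ^ s.card := by
            refine add_le_add ?_ ?_
            · exact mul_le_mul hai IH (abs_nonneg _) hK0
            · exact mul_le_mul habi hPb (abs_nonneg _) he
      _ = (s.card : ℝ) * K ^ (s.card + 1) * e + e * K ^ s.card := by rw [pow_succ]; ring
      _ ≤ (s.card : ℝ) * K ^ (s.card + 1) * e + e * K ^ (s.card + 1) := by
            have := mul_le_mul_of_nonneg_left hpow he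
            linarith
      _ = ((s.card + 1 : ℕ) : ℝ) * K ^ (s.card + 1) * e := by push_cast; ring

private lemma aux_rpow_le_max_mul {d D p q : ℝ} (hd : 0 ≤ d) (hdD : d ≤ D)
    (hq : 0 < q) (hqp : q ≤ p) (hp1 : p ≤ 1) :
    d ^ p ≤ max 1 D * d ^ q := by
  have hp0 : 0 < p := lt_of_lt_of_le hq hqp
  rcases eq_or_lt_of_le hd with h0 | h0
  · rw [← h0, Real.zero_rpow hp0.ne', Real.zero_rpow hq.ne', mul_zero]
  · rcases le_or_gt d 1 with h1 | h1
    · calc d ^ p ≤ d ^ q := Real.rpow_le_rpow_of_exponent_ge h0 h1 hqp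
        _ = 1 * d ^ q := (one_mul _).symm
        _ ≤ max 1 D * d ^ q :=
            mul_le_mul_of_nonneg_right (le_max_left _ _) (Real.rpow_nonneg hd _)
    · calc d ^ p ≤ d ^ (1 : ℝ) := Real.rpow_le_rpow_of_exponent_le h1.le hp1
        _ = d := Real.rpow_one d
        _ ≤ D := hdD
        _ ≤ max 1 D := le_max_right _ _
        _ = max 1 D * 1 := (mul_one _).symm
        _ ≤ max 1 D * d ^ q := mul_le_mul_of_nonneg_left
            (Real.one_le_rpow h1.le hq.le) (zero_le_one.trans (le_max_left _ _))

/-- μ is locally Hölder continuous of order 1/n on ℝ₊^{n×n}. -/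
theorem mu_hoelder {n : ℕ} (U : Set (Fin n → Fin n → ℝ))
    (hU : Bornology.IsBounded U) (hU0 : ∀ A ∈ U, ∀ i j, 0 ≤ A i j) :
    ∃ C : ℝ, 0 ≤ C ∧ ∀ A ∈ U, ∀ B ∈ U,
      |mu A - mu B| ≤ C * ‖A - B‖ ^ ((1 : ℝ) / (n : ℝ)) := by
  rcases Nat.eq_zero_or_pos n with hn | hn
  · subst hn
    refine ⟨0, le_refl 0, ?_⟩
    intro A _hA B _hB
    have hAB : A = B := Subsingleton.elim A B
    simp [hAB]
  -- n ≥ 1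
  haveI : Nonempty (Fin n) := ⟨⟨0, hn⟩⟩
  obtain ⟨R, hR⟩ := hU.exists_norm_le
  set K : ℝ := max 1 R with hKdef
  have hK1 : (1 : ℝ) ≤ K := le_max_left _ _
  have hK0 : (0 : ℝ) ≤ K := zero_le_one.trans hK1
  set L : ℝ := n * K ^ n with hLdef
  have hn1 : (1 : ℝ) ≤ (n : ℝ) := by exact_mod_cast hn
  have hKn1 : (1 : ℝ) ≤ K ^ n := one_le_pow₀ hK1
  have hL1 : (1 : ℝ) ≤ L := by
    calc (1 : ℝ) = 1 * 1 := (one_mul 1).symm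
      _ ≤ (n : ℝ) * K ^ n := mul_le_mul hn1 hKn1 zero_le_one (by linarith)
  have hL0 : (0 : ℝ) ≤ L := zero_le_one.trans hL1
  set C : ℝ := L * max 1 (2 * K) with hCdef
  have hC0 : (0 : ℝ) ≤ C :=
    mul_nonneg hL0 (zero_le_one.trans (le_max_left _ _))
  refine ⟨C, hC0, ?_⟩
  have key : ∀ A ∈ U, ∀ B ∈ U, mu A ≤ mu B + C * ‖A - B‖ ^ ((1 : ℝ) / (n : ℝ)) := by
    intro A hA B hB
    set d : ℝ := ‖A - B‖ with hddef
    have hd0 : (0 : ℝ) ≤ d := norm_nonneg _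
    have hdD : d ≤ 2 * K := by
      calc d ≤ ‖A‖ + ‖B‖ := norm_sub_le _ _
        _ ≤ R + R := add_le_add (hR A hA) (hR B hB)
        _ ≤ K + K := add_le_add (le_max_right _ _) (le_max_right _ _)
        _ = 2 * K := by ring
    have hent : ∀ X, X ∈ U → ∀ i j : Fin n, |X i j| ≤ K := by
      intro X hX i j
      calc |X i j| = ‖X i j‖ := rfl
        _ ≤ ‖X i‖ := norm_le_pi_norm (X i) j
        _ ≤ ‖X‖ := norm_le_pi_norm X i
        _ ≤ R := hR X hX
        _ ≤ K := le_max_right _ _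
    have hdiff : ∀ i j : Fin n, |A i j - B i j| ≤ d := by
      intro i j
      have h1 : ‖(A - B) i j‖ ≤ ‖(A - B) i‖ := norm_le_pi_norm ((A - B) i) j
      have h2 : ‖(A - B) i‖ ≤ ‖A - B‖ := norm_le_pi_norm (A - B) i
      simpa using h1.trans h2
    set ε : ℝ := C * d ^ ((1 : ℝ) / (n : ℝ)) with hεdef
    have hε0 : (0 : ℝ) ≤ ε := mul_nonneg hC0 (Real.rpow_nonneg hd0 _)
    have hterm : ∀ (k : Fin n) (c : {f : Fin (k.1 + 1) → Fin n // Function.Injective f}),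
        (∏ j : Fin (k.1 + 1), A (c.1 j) (c.1 (j + 1))) ^ ((1 : ℝ) / ((k.1 : ℝ) + 1))
          ≤ (∏ j : Fin (k.1 + 1), B (c.1 j) (c.1 (j + 1))) ^ ((1 : ℝ) / ((k.1 : ℝ) + 1)) + ε := by
      intro k c
      have hm_le : k.1 + 1 ≤ n := k.isLt
      have hmR : ((k.1 : ℝ) + 1) ≤ (n : ℝ) := by exact_mod_cast hm_le
      set p : ℝ := (1 : ℝ) / ((k.1 : ℝ) + 1) with hpdef
      have hkpos : (0 : ℝ) < (k.1 : ℝ) + 1 := by positivity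
      have hp0 : 0 < p := by positivity
      have hp1 : p ≤ 1 := by
        rw [hpdef, div_le_one hkpos]
        have : (0 : ℝ) ≤ (k.1 : ℝ) := Nat.cast_nonneg _
        linarith
      have hqp : (1 : ℝ) / (n : ℝ) ≤ p := by
        rw [hpdef]
        exact one_div_le_one_div_of_le hkpos hmR
      have hq0 : (0 : ℝ) < (1 : ℝ) / (n : ℝ) := by positivity
      set PA : ℝ := ∏ j : Fin (k.1 + 1), A (c.1 j) (c.1 (j + 1)) with hPAdef
      set PB : ℝ := ∏ j : Fin (k.1 + 1), B (c.1 j) (c.1 (j + 1)) with hPBdef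
      have hPA0 : 0 ≤ PA := Finset.prod_nonneg fun j _ => hU0 A hA _ _
      have hPB0 : 0 ≤ PB := Finset.prod_nonneg fun j _ => hU0 B hB _ _
      have hPd : |PA - PB| ≤ L * d := by
        have h := aux_prod_sub_le (Finset.univ : Finset (Fin (k.1 + 1)))
          (fun j => A (c.1 j) (c.1 (j + 1))) (fun j => B (c.1 j) (c.1 (j + 1)))
          hK1 hd0 (fun j _ => hent A hA _ _) (fun j _ => hent B hB _ _)
          (fun j _ => hdiff _ _)
        rw [Finset.card_univ, Fintype.card_fin] at h
        refine h.trans ?_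
        have hpowle : K ^ (k.1 + 1) ≤ K ^ n := pow_le_pow_right₀ hK1 hm_le
        have hKm0 : (0 : ℝ) ≤ K ^ (k.1 + 1) := pow_nonneg hK0 _
        have hmn : ((k.1 + 1 : ℕ) : ℝ) * K ^ (k.1 + 1) ≤ (n : ℝ) * K ^ n := by
          have hcast : ((k.1 + 1 : ℕ) : ℝ) ≤ (n : ℝ) := by exact_mod_cast hm_le
          exact mul_le_mul hcast hpowle hKm0 (Nat.cast_nonneg _)
        rw [hLdef]
        exact mul_le_mul_of_nonneg_right hmn hd0
      have h1 : PA ^ p ≤ PB ^ p + |PA - PB| ^ p := aux_rpow_sub_le hPA0 hPB0 hp0.le hp1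
      have h2 : |PA - PB| ^ p ≤ (L * d) ^ p := Real.rpow_le_rpow (abs_nonneg _) hPd hp0.le
      have h3 : (L * d) ^ p = L ^ p * d ^ p := Real.mul_rpow hL0 hd0
      have h4 : L ^ p ≤ L := by
        calc L ^ p ≤ L ^ (1 : ℝ) := Real.rpow_le_rpow_of_exponent_le hL1 hp1
          _ = L := Real.rpow_one L
      have h5 : d ^ p ≤ max 1 (2 * K) * d ^ ((1 : ℝ) / (n : ℝ)) :=
        aux_rpow_le_max_mul hd0 hdD hq0 hqp hp1
      have h6 : (L * d) ^ p ≤ ε := by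
        rw [h3, hεdef, hCdef]
        calc L ^ p * d ^ p ≤ L * d ^ p :=
              mul_le_mul_of_nonneg_right h4 (Real.rpow_nonneg hd0 _)
          _ ≤ L * (max 1 (2 * K) * d ^ ((1 : ℝ) / (n : ℝ))) :=
              mul_le_mul_of_nonneg_left h5 hL0
          _ = L * max 1 (2 * K) * d ^ ((1 : ℝ) / (n : ℝ)) := by ring
      calc PA ^ p ≤ PB ^ p + |PA - PB| ^ p := h1
        _ ≤ PB ^ p + (L * d) ^ p := by linarith
        _ ≤ PB ^ p + ε := by linarith
    -- assemble the suprema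
    have hle : mu A ≤ mu B + ε := by
      rw [mu]
      refine ciSup_le fun k => ?_
      haveI : Nonempty {f : Fin (k.1 + 1) → Fin n // Function.Injective f} :=
        ⟨⟨Fin.castLE k.isLt, Fin.castLE_injective _⟩⟩
      refine ciSup_le fun c => ?_
      have hB1 : (∏ j : Fin (k.1 + 1), B (c.1 j) (c.1 (j + 1))) ^ ((1 : ℝ) / ((k.1 : ℝ) + 1))
          ≤ mu B := by
        have hinner : (∏ j : Fin (k.1 + 1), B (c.1 j) (c.1 (j + 1))) ^ ((1 : ℝ) / ((k.1 : ℝ) + 1))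
            ≤ ⨆ c' : {f : Fin (k.1 + 1) → Fin n // Function.Injective f},
              (∏ j : Fin (k.1 + 1), B (c'.1 j) (c'.1 (j + 1))) ^ ((1 : ℝ) / ((k.1 : ℝ) + 1)) :=
          le_ciSup (f := fun c' : {f : Fin (k.1 + 1) → Fin n // Function.Injective f} =>
              (∏ j : Fin (k.1 + 1), B (c'.1 j) (c'.1 (j + 1))) ^ ((1 : ℝ) / ((k.1 : ℝ) + 1)))
            (Set.Finite.bddAbove (Set.finite_range _)) c
        have houter : (⨆ c' : {f : Fin (k.1 + 1) → Fin n // Function.Injective f},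
              (∏ j : Fin (k.1 + 1), B (c'.1 j) (c'.1 (j + 1))) ^ ((1 : ℝ) / ((k.1 : ℝ) + 1)))
            ≤ mu B := by
          rw [mu]
          exact le_ciSup (f := fun k' : Fin n =>
              ⨆ c' : {f : Fin (k'.1 + 1) → Fin n // Function.Injective f},
                (∏ j : Fin (k'.1 + 1), B (c'.1 j) (c'.1 (j + 1))) ^ ((1 : ℝ) / ((k'.1 : ℝ) + 1)))
            (Set.Finite.bddAbove (Set.finite_range _)) k
        exact hinner.trans houter
      have := hterm k c
      linarith
    exact hle
  intro A hA B hB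
  have h1 := key A hA B hB
  have h2 := key B hB A hA
  rw [norm_sub_rev B A] at h2
  rw [abs_sub_le_iff]
  constructor <;> linarith

end MaxAlg
end

section
/- The max-algebraic joint spectral radius μ is Hölder continuous of order 1/n on the space of compact subsets of ℝ₊^{n×n} contained in any fixed bounded set, endowed with the Hausdorff metric: there is C with |μ(Ψ) − μ(Φ)| ≤ C·H(Ψ,Φ)^{1/n}. -/
open scoped BigOperators

namespace MaxAlg


private lemma rpow_add_le {x y p : ℝ} (hx : 0 ≤ x) (hy : 0 ≤ y) (hp : 0 < p)
    (hp1 : p ≤ 1) : (x + y) ^ p ≤ x ^ p + y ^ p := by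
  rcases eq_or_lt_of_le (add_nonneg hx hy) with h | h
  · have hx0 : x = 0 := by linarith
    have hy0 : y = 0 := by linarith
    simp [hx0, hy0, Real.zero_rpow hp.ne']
  · have hx1 : x / (x + y) ≤ 1 := (div_le_one h).mpr (by linarith)
    have hy1 : y / (x + y) ≤ 1 := (div_le_one h).mpr (by linarith)
    have h1 : x / (x + y) ≤ (x / (x + y)) ^ p := by
      have := Real.rpow_le_rpow_of_exponent_ge' (div_nonneg hx h.le) hx1 hp.le hp1
      simpa using this
    have h2 : y / (x + y) ≤ (y / (x + y)) ^ p := by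
      have := Real.rpow_le_rpow_of_exponent_ge' (div_nonneg hy h.le) hy1 hp.le hp1
      simpa using this
    have h3 : (1 : ℝ) ≤ (x / (x + y)) ^ p + (y / (x + y)) ^ p := by
      have : x / (x + y) + y / (x + y) = 1 := by field_simp
      linarith
    rw [Real.div_rpow hx h.le, Real.div_rpow hy h.le] at h3
    have hpos : 0 < (x + y) ^ p := Real.rpow_pos_of_pos h p
    rw [← add_div, le_div_iff₀ hpos, one_mul] at h3
    linarith

private lemma prod_le_prod_add : ∀ (m : ℕ) (a b : Fin m → ℝ) (δ R : ℝ),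
    0 ≤ δ → 1 ≤ R → (∀ j, 0 ≤ b j) → (∀ j, b j + δ ≤ R) →
    (∀ j, 0 ≤ a j) → (∀ j, a j ≤ b j + δ) →
    ∏ j, a j ≤ ∏ j, b j + m * R ^ m * δ
  | 0, a, b, δ, R, hδ, hR, hb0, hbR, ha0, hab => by simp
  | m + 1, a, b, δ, R, hδ, hR, hb0, hbR, ha0, hab => by
    rw [Fin.prod_univ_succ, Fin.prod_univ_succ]
    have IH := prod_le_prod_add m (fun j => a j.succ) (fun j => b j.succ) δ R hδ hR
      (fun j => hb0 j.succ) (fun j => hbR j.succ) (fun j => ha0 j.succ) (fun j => hab j.succ)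
    have hP0 : (0 : ℝ) ≤ ∏ j : Fin m, b j.succ :=
      Finset.prod_nonneg fun j _ => hb0 j.succ
    have hPa0 : (0 : ℝ) ≤ ∏ j : Fin m, a j.succ :=
      Finset.prod_nonneg fun j _ => ha0 j.succ
    have hPR : ∏ j : Fin m, b j.succ ≤ R ^ m := by
      calc ∏ j : Fin m, b j.succ ≤ ∏ _j : Fin m, R :=
            Finset.prod_le_prod (fun j _ => hb0 j.succ)
              (fun j _ => by have := hbR j.succ; linarith)
        _ = R ^ m := by simp
    have h1 : a 0 * ∏ j : Fin m, a j.succ ≤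
        (b 0 + δ) * (∏ j : Fin m, b j.succ + m * R ^ m * δ) := by
      apply mul_le_mul (hab 0) IH hPa0
      have := hb0 0; linarith
    have hRm : (1 : ℝ) ≤ R ^ m := one_le_pow₀ hR
    have hb00 := hb0 0
    have hbR0 := hbR 0
    refine h1.trans ?_
    have hcast : ((m + 1 : ℕ) : ℝ) = (m : ℝ) + 1 := by push_cast; ring
    rw [hcast, pow_succ]
    nlinarith [mul_le_mul_of_nonneg_left hPR hδ,
      mul_nonneg (mul_nonneg hδ (by positivity : (0:ℝ) ≤ R ^ m))
        (by linarith : (0:ℝ) ≤ R - 1),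
      mul_nonneg (by linarith : (0:ℝ) ≤ R - (b 0 + δ))
        (mul_nonneg (mul_nonneg (Nat.cast_nonneg m : (0:ℝ) ≤ (m:ℝ))
          (by positivity : (0:ℝ) ≤ R ^ m)) hδ)]

private lemma inj_nonempty {n : ℕ} (k : Fin n) :
    Nonempty {f : Fin (k.1 + 1) → Fin n // Function.Injective f} :=
  ⟨⟨Fin.castLE k.isLt, Fin.castLE_injective _⟩⟩

private lemma le_mu {n : ℕ} (A : Fin n → Fin n → ℝ) (k : Fin n)
    (c : {f : Fin (k.1 + 1) → Fin n // Function.Injective f}) :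
    (∏ j : Fin (k.1 + 1), A (c.1 j) (c.1 (j + 1))) ^ ((1 : ℝ) / ((k.1 : ℝ) + 1)) ≤ mu A := by
  have h1 : (∏ j : Fin (k.1 + 1), A (c.1 j) (c.1 (j + 1))) ^ ((1 : ℝ) / ((k.1 : ℝ) + 1)) ≤
      ⨆ c : {f : Fin (k.1 + 1) → Fin n // Function.Injective f},
        (∏ j : Fin (k.1 + 1), A (c.1 j) (c.1 (j + 1))) ^ ((1 : ℝ) / ((k.1 : ℝ) + 1)) :=
    le_ciSup (Finite.bddAbove_range (fun c : {f : Fin (k.1 + 1) → Fin n // Function.Injective f} =>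
      (∏ j : Fin (k.1 + 1), A (c.1 j) (c.1 (j + 1))) ^ ((1 : ℝ) / ((k.1 : ℝ) + 1)))) c
  refine h1.trans ?_
  exact le_ciSup (Finite.bddAbove_range (fun k : Fin n =>
    ⨆ c : {f : Fin (k.1 + 1) → Fin n // Function.Injective f},
      (∏ j : Fin (k.1 + 1), A (c.1 j) (c.1 (j + 1))) ^ ((1 : ℝ) / ((k.1 : ℝ) + 1)))) k

private lemma mu_le {n : ℕ} (hn : 0 < n) (A : Fin n → Fin n → ℝ) (M : ℝ)
    (h : ∀ (k : Fin n) (c : {f : Fin (k.1 + 1) → Fin n // Function.Injective f}),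
      (∏ j : Fin (k.1 + 1), A (c.1 j) (c.1 (j + 1))) ^ ((1 : ℝ) / ((k.1 : ℝ) + 1)) ≤ M) :
    mu A ≤ M := by
  have : Nonempty (Fin n) := ⟨⟨0, hn⟩⟩
  refine ciSup_le fun k => ?_
  have := inj_nonempty k
  exact ciSup_le fun c => h k c

private lemma term_le {n : ℕ} {A : Fin n → Fin n → ℝ} {R : ℝ} (hR : 1 ≤ R)
    (h0 : ∀ i j, 0 ≤ A i j) (hle : ∀ i j, A i j ≤ R) (k : Fin n)
    (c : {f : Fin (k.1 + 1) → Fin n // Function.Injective f}) :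
    (∏ j : Fin (k.1 + 1), A (c.1 j) (c.1 (j + 1))) ^ ((1 : ℝ) / ((k.1 : ℝ) + 1)) ≤ R := by
  have hR0 : (0 : ℝ) ≤ R := zero_le_one.trans hR
  have hprod : ∏ j : Fin (k.1 + 1), A (c.1 j) (c.1 (j + 1)) ≤ R ^ (k.1 + 1) := by
    calc ∏ j : Fin (k.1 + 1), A (c.1 j) (c.1 (j + 1)) ≤ ∏ _j : Fin (k.1 + 1), R :=
          Finset.prod_le_prod (fun j _ => h0 _ _) (fun j _ => hle _ _)
      _ = R ^ (k.1 + 1) := by simp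
  have hpn : (0 : ℝ) ≤ ∏ j : Fin (k.1 + 1), A (c.1 j) (c.1 (j + 1)) :=
    Finset.prod_nonneg fun j _ => h0 _ _
  have hexp : (0 : ℝ) ≤ (1 : ℝ) / ((k.1 : ℝ) + 1) := by positivity
  calc (∏ j : Fin (k.1 + 1), A (c.1 j) (c.1 (j + 1))) ^ ((1 : ℝ) / ((k.1 : ℝ) + 1))
      ≤ (R ^ (k.1 + 1)) ^ ((1 : ℝ) / ((k.1 : ℝ) + 1)) := Real.rpow_le_rpow hpn hprod hexp
    _ = R := by
        rw [← Real.rpow_natCast R (k.1 + 1), ← Real.rpow_mul hR0]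
        have : ((k.1 + 1 : ℕ) : ℝ) * ((1 : ℝ) / ((k.1 : ℝ) + 1)) = 1 := by
          push_cast
          field_simp
        rw [this, Real.rpow_one]

private lemma term_nonneg {n : ℕ} {A : Fin n → Fin n → ℝ}
    (h0 : ∀ i j, 0 ≤ A i j) (k : Fin n)
    (c : {f : Fin (k.1 + 1) → Fin n // Function.Injective f}) :
    0 ≤ (∏ j : Fin (k.1 + 1), A (c.1 j) (c.1 (j + 1))) ^ ((1 : ℝ) / ((k.1 : ℝ) + 1)) :=
  Real.rpow_nonneg (Finset.prod_nonneg fun j _ => h0 _ _) _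

private lemma mu_nonneg {n : ℕ} (hn : 0 < n) {A : Fin n → Fin n → ℝ}
    (h0 : ∀ i j, 0 ≤ A i j) : 0 ≤ mu A := by
  obtain ⟨c⟩ := inj_nonempty (⟨0, hn⟩ : Fin n)
  exact (term_nonneg h0 ⟨0, hn⟩ c).trans (le_mu A ⟨0, hn⟩ c)

private lemma mu_sub_le {n : ℕ} (hn : 0 < n) (A B : Fin n → Fin n → ℝ) (R δ : ℝ)
    (hR : 1 ≤ R) (hδ : 0 ≤ δ)
    (hA0 : ∀ i j, 0 ≤ A i j) (hAR : ∀ i j, A i j ≤ R)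
    (hB0 : ∀ i j, 0 ≤ B i j) (hBR : ∀ i j, B i j ≤ R)
    (hAB : ∀ i j, A i j ≤ B i j + δ) :
    mu A ≤ mu B + ((n : ℝ) * (R + 1) ^ n) * δ ^ ((1 : ℝ) / (n : ℝ)) := by
  have hn1 : (1 : ℝ) ≤ (n : ℝ) := by exact_mod_cast hn
  have hR1 : (1 : ℝ) ≤ R + 1 := by linarith
  have hRn1 : (1 : ℝ) ≤ (R + 1) ^ n := one_le_pow₀ hR1
  by_cases hδ1 : δ ≤ 1
  · -- small δ case
    apply mu_le hn
    intro k c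
    have hm : k.1 + 1 ≤ n := k.isLt
    have hk0 : (0 : ℝ) ≤ (k.1 : ℝ) := Nat.cast_nonneg _
    have hmpos : (0 : ℝ) < (k.1 : ℝ) + 1 := by positivity
    have hcast : ((k.1 + 1 : ℕ) : ℝ) = (k.1 : ℝ) + 1 := by push_cast; ring
    have hprod : ∏ j : Fin (k.1 + 1), A (c.1 j) (c.1 (j + 1)) ≤
        ∏ j : Fin (k.1 + 1), B (c.1 j) (c.1 (j + 1)) +
          ((k.1 : ℝ) + 1) * (R + 1) ^ (k.1 + 1) * δ := by
      have := prod_le_prod_add (k.1 + 1) (fun j => A (c.1 j) (c.1 (j + 1)))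
        (fun j => B (c.1 j) (c.1 (j + 1))) δ (R + 1) hδ hR1
        (fun j => hB0 _ _) (fun j => by have := hBR (c.1 j) (c.1 (j + 1)); linarith)
        (fun j => hA0 _ _) (fun j => hAB _ _)
      rwa [hcast] at this
    have hPB0 : (0 : ℝ) ≤ ∏ j : Fin (k.1 + 1), B (c.1 j) (c.1 (j + 1)) :=
      Finset.prod_nonneg fun j _ => hB0 _ _
    have hPA0 : (0 : ℝ) ≤ ∏ j : Fin (k.1 + 1), A (c.1 j) (c.1 (j + 1)) :=
      Finset.prod_nonneg fun j _ => hA0 _ _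
    have hq0 : (0 : ℝ) < (1 : ℝ) / ((k.1 : ℝ) + 1) := by positivity
    have hq1 : (1 : ℝ) / ((k.1 : ℝ) + 1) ≤ 1 := by
      rw [div_le_one hmpos]; linarith
    have hcorr0 : (0 : ℝ) ≤ ((k.1 : ℝ) + 1) * (R + 1) ^ (k.1 + 1) * δ := by positivity
    have step1 : (∏ j : Fin (k.1 + 1), A (c.1 j) (c.1 (j + 1))) ^ ((1 : ℝ) / ((k.1 : ℝ) + 1)) ≤
        (∏ j : Fin (k.1 + 1), B (c.1 j) (c.1 (j + 1)) +
          ((k.1 : ℝ) + 1) * (R + 1) ^ (k.1 + 1) * δ) ^ ((1 : ℝ) / ((k.1 : ℝ) + 1)) :=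
      Real.rpow_le_rpow hPA0 hprod hq0.le
    have step2 : (∏ j : Fin (k.1 + 1), B (c.1 j) (c.1 (j + 1)) +
          ((k.1 : ℝ) + 1) * (R + 1) ^ (k.1 + 1) * δ) ^ ((1 : ℝ) / ((k.1 : ℝ) + 1)) ≤
        (∏ j : Fin (k.1 + 1), B (c.1 j) (c.1 (j + 1))) ^ ((1 : ℝ) / ((k.1 : ℝ) + 1)) +
          (((k.1 : ℝ) + 1) * (R + 1) ^ (k.1 + 1) * δ) ^ ((1 : ℝ) / ((k.1 : ℝ) + 1)) :=
      rpow_add_le hPB0 hcorr0 hq0 hq1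
    have hBmu : (∏ j : Fin (k.1 + 1), B (c.1 j) (c.1 (j + 1))) ^
        ((1 : ℝ) / ((k.1 : ℝ) + 1)) ≤ mu B := le_mu B k c
    have hmRm1 : (1 : ℝ) ≤ ((k.1 : ℝ) + 1) * (R + 1) ^ (k.1 + 1) := by
      have h2 : (1 : ℝ) ≤ (R + 1) ^ (k.1 + 1) := one_le_pow₀ hR1
      nlinarith
    have hsplit : (((k.1 : ℝ) + 1) * (R + 1) ^ (k.1 + 1) * δ) ^ ((1 : ℝ) / ((k.1 : ℝ) + 1)) =
        (((k.1 : ℝ) + 1) * (R + 1) ^ (k.1 + 1)) ^ ((1 : ℝ) / ((k.1 : ℝ) + 1)) *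
          δ ^ ((1 : ℝ) / ((k.1 : ℝ) + 1)) :=
      Real.mul_rpow (by positivity) hδ
    have hc1 : (((k.1 : ℝ) + 1) * (R + 1) ^ (k.1 + 1)) ^ ((1 : ℝ) / ((k.1 : ℝ) + 1)) ≤
        ((k.1 : ℝ) + 1) * (R + 1) ^ (k.1 + 1) := by
      have := Real.rpow_le_rpow_of_exponent_le hmRm1 hq1
      rwa [Real.rpow_one] at this
    have hc2 : ((k.1 : ℝ) + 1) * (R + 1) ^ (k.1 + 1) ≤ (n : ℝ) * (R + 1) ^ n := by
      have h1 : ((k.1 : ℝ) + 1) ≤ (n : ℝ) := by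
        rw [← hcast]; exact_mod_cast hm
      have h2 : (R + 1) ^ (k.1 + 1) ≤ (R + 1) ^ n := pow_le_pow_right₀ hR1 hm
      have h3 : (0 : ℝ) ≤ (R + 1) ^ (k.1 + 1) := by positivity
      nlinarith
    have hd : δ ^ ((1 : ℝ) / ((k.1 : ℝ) + 1)) ≤ δ ^ ((1 : ℝ) / (n : ℝ)) := by
      rcases eq_or_lt_of_le hδ with h0 | h0
      · have hnRpos : (0 : ℝ) < (n : ℝ) := by exact_mod_cast hn
        rw [← h0, Real.zero_rpow hq0.ne',
          Real.zero_rpow (one_div_pos.mpr hnRpos).ne']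
      · apply Real.rpow_le_rpow_of_exponent_ge h0 hδ1
        apply one_div_le_one_div_of_le hmpos
        rw [← hcast]; exact_mod_cast hm
    have hcorr : (((k.1 : ℝ) + 1) * (R + 1) ^ (k.1 + 1) * δ) ^ ((1 : ℝ) / ((k.1 : ℝ) + 1)) ≤
        ((n : ℝ) * (R + 1) ^ n) * δ ^ ((1 : ℝ) / (n : ℝ)) := by
      rw [hsplit]
      exact mul_le_mul (hc1.trans hc2) hd (Real.rpow_nonneg hδ _) (by positivity)
    linarith [step1, step2, hBmu, hcorr]
  · -- large δ case
    push_neg at hδ1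
    have h1 : mu A ≤ R := mu_le hn A R (fun k c => term_le hR hA0 hAR k c)
    have h2 : 0 ≤ mu B := mu_nonneg hn hB0
    have h3 : (1 : ℝ) ≤ δ ^ ((1 : ℝ) / (n : ℝ)) :=
      Real.one_le_rpow hδ1.le (by positivity)
    have hRn2 : R + 1 ≤ (R + 1) ^ n := le_self_pow₀ (by linarith) (by omega)
    have h4 : R ≤ (n : ℝ) * (R + 1) ^ n := by
      have h5 : (R + 1) ^ n ≤ (n : ℝ) * (R + 1) ^ n :=
        le_mul_of_one_le_left (by positivity) hn1
      linarith
    have h6 := mul_le_mul_of_nonneg_left h3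
      (by positivity : (0 : ℝ) ≤ (n : ℝ) * (R + 1) ^ n)
    rw [mul_one] at h6
    linarith

private lemma Ssup_le_Ssup_add {n : ℕ} (Ψ Φ : Set (Fin n → Fin n → ℝ))
    (hΨc : IsCompact Ψ) (hΦc : IsCompact Φ) (hΨ : Ψ.Nonempty) (hΦ : Φ.Nonempty)
    (i j : Fin n) :
    Ssup Ψ i j ≤ Ssup Φ i j + Metric.hausdorffDist Ψ Φ := by
  have hne : EMetric.hausdorffEdist Ψ Φ ≠ ⊤ :=
    Metric.hausdorffEdist_ne_top_of_nonempty_of_bounded hΨ hΦ hΨc.isBounded hΦc.isBounded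
  have hcont : Continuous fun A : Fin n → Fin n → ℝ => A i j :=
    (continuous_apply j).comp (continuous_apply i)
  apply csSup_le (hΨ.image _)
  rintro x ⟨A, hA, rfl⟩
  obtain ⟨B, hB, hBd⟩ := hΦc.exists_infDist_eq_dist hΦ A
  have hd : dist A B ≤ Metric.hausdorffDist Ψ Φ := by
    rw [← hBd]
    exact Metric.infDist_le_hausdorffDist_of_mem hA hne
  have h1 : A i j - B i j ≤ dist A B := by
    have h2 : dist (A i j) (B i j) ≤ dist A B :=
      (dist_le_pi_dist (A i) (B i) j).trans (dist_le_pi_dist A B i)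
    rw [Real.dist_eq] at h2
    calc A i j - B i j ≤ |A i j - B i j| := le_abs_self _
      _ ≤ dist A B := h2
  have hBle : B i j ≤ Ssup Φ i j := by
    apply le_csSup ((hΦc.image hcont).bddAbove)
    exact Set.mem_image_of_mem _ hB
  simp only
  linarith



/-- μ is Hölder continuous of order 1/n on compact subsets of a
fixed bounded set, with respect to the Hausdorff metric. -/
theorem muSet_hoelder {n : ℕ} (K : Set (Fin n → Fin n → ℝ))
    (hK : Bornology.IsBounded K) :
    ∃ C : ℝ, 0 ≤ C ∧ ∀ Ψ Φ : Set (Fin n → Fin n → ℝ),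
      IsCompact Ψ → IsCompact Φ → Ψ.Nonempty → Φ.Nonempty →
      Ψ ⊆ K → Φ ⊆ K →
      (∀ A ∈ Ψ, ∀ i j, 0 ≤ A i j) → (∀ A ∈ Φ, ∀ i j, 0 ≤ A i j) →
      |muSet Ψ - muSet Φ| ≤ C * (Metric.hausdorffDist Ψ Φ) ^ ((1 : ℝ) / (n : ℝ)) := by
  rcases Nat.eq_zero_or_pos n with hn | hn
  · subst hn
    refine ⟨0, le_refl 0, fun Ψ Φ _ _ _ _ _ _ _ _ => ?_⟩
    simp [muSet, mu]
  · obtain ⟨R0, hR0⟩ := isBounded_iff_forall_norm_le.mp hK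
    set R : ℝ := max R0 1 with hRdef
    have hR1 : (1 : ℝ) ≤ R := le_max_right _ _
    refine ⟨(n : ℝ) * (R + 1) ^ n, by positivity, ?_⟩
    intro Ψ Φ hΨc hΦc hΨne hΦne hΨK hΦK hΨ0 hΦ0
    have hentry : ∀ (Θ : Set (Fin n → Fin n → ℝ)), Θ ⊆ K →
        (∀ A ∈ Θ, ∀ i j, 0 ≤ A i j) → IsCompact Θ → Θ.Nonempty →
        ∀ i j, 0 ≤ Ssup Θ i j ∧ Ssup Θ i j ≤ R := by
      intro Θ hΘK h0 hΘc hΘ i j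
      have hcont : Continuous fun A : Fin n → Fin n → ℝ => A i j :=
        (continuous_apply j).comp (continuous_apply i)
      have hbdd : BddAbove ((fun A => A i j) '' Θ) := (hΘc.image hcont).bddAbove
      constructor
      · obtain ⟨A, hA⟩ := hΘ
        exact le_trans (h0 A hA i j) (le_csSup hbdd (Set.mem_image_of_mem _ hA))
      · apply csSup_le (hΘ.image _)
        rintro x ⟨A, hA, rfl⟩
        have h1 : A i j ≤ ‖A i j‖ := le_abs_self _
        have h2 : ‖A i j‖ ≤ ‖A i‖ := norm_le_pi_norm (A i) j
        have h3 : ‖A i‖ ≤ ‖A‖ := norm_le_pi_norm A i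
        have h4 := hR0 A (hΘK hA)
        have h5 : R0 ≤ R := le_max_left _ _
        simp only
        linarith
    have hΨe := hentry Ψ hΨK hΨ0 hΨc hΨne
    have hΦe := hentry Φ hΦK hΦ0 hΦc hΦne
    have hδ : 0 ≤ Metric.hausdorffDist Ψ Φ := Metric.hausdorffDist_nonneg
    have hcomm : Metric.hausdorffDist Φ Ψ = Metric.hausdorffDist Ψ Φ :=
      Metric.hausdorffDist_comm
    have hΨΦ := Ssup_le_Ssup_add Ψ Φ hΨc hΦc hΨne hΦne
    have hΦΨ := Ssup_le_Ssup_add Φ Ψ hΦc hΨc hΦne hΨne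
    rw [abs_sub_le_iff]
    constructor
    · have h := mu_sub_le hn (Ssup Ψ) (Ssup Φ) R (Metric.hausdorffDist Ψ Φ) hR1 hδ
        (fun i j => (hΨe i j).1) (fun i j => (hΨe i j).2)
        (fun i j => (hΦe i j).1) (fun i j => (hΦe i j).2)
        (fun i j => hΨΦ i j)
      simp only [muSet]
      linarith
    · have h := mu_sub_le hn (Ssup Φ) (Ssup Ψ) R (Metric.hausdorffDist Ψ Φ) hR1 hδ
        (fun i j => (hΦe i j).1) (fun i j => (hΦe i j).2)
        (fun i j => (hΨe i j).1) (fun i j => (hΨe i j).2)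
        (fun i j => hcomm ▸ hΦΨ i j)
      simp only [muSet]
      linarith


end MaxAlg
end
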